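/- Let m ≤ n+1, f ∈ H_d[m] with f ≠ 0, and η > 0 be such that sep(η) := η√(n+1) ≤ 1/2. If x ∈ S^n satisfies ‖f(x)‖ > δ(f,η) := 1.1·√(D(n+1))·‖f‖·η, then f(y) ≠ 0 for every y in the open Euclidean ball B(x, sep(η)) ⊂ ℝ^{n+1}. -/

import Mathlib

open Function Metric Filter
open scoped ENNReal

noncomputable section

/-- Evaluation of a polynomial system as a map between Euclidean spaces. -/
def evalSys {n m : ℕ} (f : Fin m → MvPolynomial (Fin (n + 1)) ℝ) :
    EuclideanSpace ℝ (Fin (n + 1)) → EuclideanSpace ℝ (Fin m) :=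
  fun x => WithLp.toLp 2 (fun i => MvPolynomial.eval (fun j => x j) (f i))

/-- Moore–Penrose inverse A† = Aᵀ (A Aᵀ)⁻¹ of a (surjective) continuous linear map
between real inner product spaces. -/
def pinv {E F : Type*} [NormedAddCommGroup E] [InnerProductSpace ℝ E] [CompleteSpace E]
    [NormedAddCommGroup F] [InnerProductSpace ℝ F] [CompleteSpace F]
    (A : E →L[ℝ] F) : F →L[ℝ] E :=
  (ContinuousLinearMap.adjoint A).comp (Ring.inverse (A.comp (ContinuousLinearMap.adjoint A)))

/-- The diagonal matrix Δ(x) with diagonal entries ‖x‖^(dᵢ−1)·√dᵢ, as a linear map ℝ^m → ℝ^m. -/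
def Delta {n m : ℕ} (d : Fin m → ℕ) (x : EuclideanSpace ℝ (Fin (n + 1))) :
    EuclideanSpace ℝ (Fin m) →L[ℝ] EuclideanSpace ℝ (Fin m) :=
  LinearMap.toContinuousLinearMap
    (Matrix.toEuclideanLin (Matrix.diagonal fun i => ‖x‖ ^ (d i - 1) * Real.sqrt (d i)))

/-- Weyl norm squared of a polynomial system: Σᵢ Σ_a coeff²·(dᵢ choose a)⁻¹. -/
def weylNormSq {n m : ℕ} (f : Fin m → MvPolynomial (Fin (n + 1)) ℝ) : ℝ :=
  ∑ i, ∑ a ∈ (f i).support, ((f i).coeff a) ^ 2 / (Nat.multinomial a.support a : ℝ)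

/-- Weyl norm of a polynomial system. -/
def weylNorm {n m : ℕ} (f : Fin m → MvPolynomial (Fin (n + 1)) ℝ) : ℝ :=
  Real.sqrt (weylNormSq f)

/-- μ_norm(f,x) = ‖f‖·‖Df(x)†·Δ(x)‖ (real-valued formula, meaningful when Df(x) is surjective). -/
def munormR {n m : ℕ} (d : Fin m → ℕ) (f : Fin m → MvPolynomial (Fin (n + 1)) ℝ)
    (x : EuclideanSpace ℝ (Fin (n + 1))) : ℝ :=
  weylNorm f * ‖(pinv (fderiv ℝ (evalSys f) x)).comp (Delta d x)‖

open Classical in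
/-- μ_norm(f,x), with value ∞ when Df(x) is not surjective. -/
def munormE {n m : ℕ} (d : Fin m → ℕ) (f : Fin m → MvPolynomial (Fin (n + 1)) ℝ)
    (x : EuclideanSpace ℝ (Fin (n + 1))) : ℝ≥0∞ :=
  if Surjective ⇑(fderiv ℝ (evalSys f) x) then ENNReal.ofReal (munormR d f x) else ⊤

/-- The maximal degree D. -/
def Dmax {m : ℕ} (d : Fin m → ℕ) : ℕ := Finset.univ.sup d

/-!
If `f(y) = 0`, then by homogeneity `f` also vanishes at the unit vector `z = y/‖y‖`, which lies
within `1.1·sep(η)` of `x`. For unit vectors, Cauchy–Schwarz in the Weyl inner product together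
with Bernoulli's inequality gives `‖f(x) - f(z)‖ ≤ ‖f‖·√D·‖x - z‖`, so
`‖f(x)‖ ≤ 1.1·√D·‖f‖·sep(η) = δ(f, η)`.
-/

open Finset

theorem Finset.sum_pow_eq_sum_finsuppAntidiag {σ R : Type*} [Fintype σ] [DecidableEq σ]
    [CommSemiring R] (w : σ → R) (n : ℕ) :
    (∑ i, w i) ^ n = ∑ a ∈ finsuppAntidiag univ n, (a.multinomial : R) * ∏ i, w i ^ a i := by
  rw [sum_pow_eq_sum_piAntidiag]
  refine sum_nbij' Finsupp.equivFunOnFinite.symm (⇑) (fun k hk => ?_) (fun a ha => ?_)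
    (fun _ _ => rfl) (fun a _ => Finsupp.equivFunOnFinite_symm_coe a) (fun k _ => ?_)
  · simpa using (mem_piAntidiag.mp hk).1
  · simpa using (mem_finsuppAntidiag.mp ha).1
  · rw [← Finsupp.multinomial_of_support_subset (subset_univ _)]
    rfl

namespace MvPolynomial

variable {σ : Type*}

def weylNormSq (p : MvPolynomial σ ℝ) : ℝ :=
  ∑ a ∈ p.support, p.coeff a ^ 2 / a.multinomial

lemma weylNormSq_nonneg (p : MvPolynomial σ ℝ) : 0 ≤ p.weylNormSq :=
  sum_nonneg fun _ _ => by positivity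

variable [Fintype σ] {R : Type*} [CommSemiring R] {n : ℕ}

lemma IsHomogeneous.support_subset_finsuppAntidiag [DecidableEq σ] {p : MvPolynomial σ R}
    (hp : p.IsHomogeneous n) : p.support ⊆ finsuppAntidiag univ n := fun a ha =>
  mem_finsuppAntidiag.mpr ⟨by
    rw [← Finsupp.degree_eq_sum, Finsupp.degree_eq_weight_one]; exact hp (mem_support_iff.mp ha),
    subset_univ _⟩

lemma IsHomogeneous.eval_smul {p : MvPolynomial σ R} (hp : p.IsHomogeneous n) (c : R)
    (w : σ → R) : eval (c • w) p = c ^ n * eval w p := by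
  classical
  rw [eval_eq', eval_eq', mul_sum]
  refine sum_congr rfl fun a ha => ?_
  have hdeg : ∑ i, a i = n := (mem_finsuppAntidiag.mp (hp.support_subset_finsuppAntidiag ha)).1
  simp only [Pi.smul_apply, smul_eq_mul, mul_pow, prod_mul_distrib, prod_pow_eq_pow_sum, hdeg]
  ring

/-- Cauchy–Schwarz for the Weyl inner product: `p(u) - p(v) = ⟨p, ⟨u, ·⟩ⁿ - ⟨v, ·⟩ⁿ⟩`, and the
multinomial theorem computes `‖⟨u, ·⟩ⁿ - ⟨v, ·⟩ⁿ‖²` as the second factor. -/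
theorem IsHomogeneous.sq_eval_sub_eval_le {p : MvPolynomial σ ℝ} (hp : p.IsHomogeneous n)
    (u v : σ → ℝ) :
    (eval u p - eval v p) ^ 2 ≤
      p.weylNormSq * ((∑ j, u j ^ 2) ^ n + (∑ j, v j ^ 2) ^ n - 2 * (∑ j, u j * v j) ^ n) := by
  classical
  set C : (σ →₀ ℕ) → ℝ := fun a => a.multinomial
  have hC : ∀ a, 0 < C a := fun a => Nat.cast_pos.mpr (Nat.multinomial_pos _ _)
  set mon : (σ → ℝ) → (σ →₀ ℕ) → ℝ := fun w a => ∏ j, w j ^ a j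
  have hdiff : eval u p - eval v p = ∑ a ∈ p.support, p.coeff a * (mon u a - mon v a) := by
    simp only [eval_eq', mon, mul_sub, sum_sub_distrib]
  have hexpand : ∀ a, C a * (mon u a - mon v a) ^ 2 = C a * mon (fun j => u j ^ 2) a
      + C a * mon (fun j => v j ^ 2) a - 2 * (C a * mon (fun j => u j * v j) a) := by
    intro a
    have hsq : ∀ w : σ → ℝ, mon (fun j => w j ^ 2) a = mon w a ^ 2 := fun w => by
      simp only [mon, ← prod_pow, ← pow_mul, mul_comm]
    simp only [hsq, mon, mul_pow, prod_mul_distrib]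
    ring
  calc (eval u p - eval v p) ^ 2
      ≤ (∑ a ∈ p.support, p.coeff a ^ 2 / C a) *
          ∑ a ∈ p.support, C a * (mon u a - mon v a) ^ 2 := by
        rw [hdiff]
        refine sum_sq_le_sum_mul_sum_of_sq_le_mul _ (fun a _ => by positivity)
          (fun a _ => by positivity) fun a _ => le_of_eq ?_
        field_simp [(hC a).ne']
    _ ≤ p.weylNormSq * ∑ a ∈ finsuppAntidiag univ n, C a * (mon u a - mon v a) ^ 2 :=
        mul_le_mul_of_nonneg_left (sum_le_sum_of_subset_of_nonneg
          hp.support_subset_finsuppAntidiag fun a _ _ => by positivity) p.weylNormSq_nonneg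
    _ = _ := by
        simp only [hexpand, sum_sub_distrib, sum_add_distrib, ← mul_sum, C, mon,
          ← sum_pow_eq_sum_finsuppAntidiag]

lemma IsHomogeneous.sq_eval_sub_eval_le_of_norm_eq_one {p : MvPolynomial σ ℝ}
    (hp : p.IsHomogeneous n) {x z : EuclideanSpace ℝ σ} (hx : ‖x‖ = 1) (hz : ‖z‖ = 1) :
    (eval x.ofLp p - eval z.ofLp p) ^ 2 ≤ p.weylNormSq * n * ‖x - z‖ ^ 2 := by
  have hcs := hp.sq_eval_sub_eval_le x.ofLp z.ofLp
  have hsq : ∀ w : EuclideanSpace ℝ σ, ∑ j, w j ^ 2 = ‖w‖ ^ 2 := fun w =>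
    (EuclideanSpace.real_norm_sq_eq w).symm
  have hinner : ∑ j, x j * z j = inner ℝ x z := by simp [PiLp.inner_apply, mul_comm]
  rw [hsq, hsq, hinner, hx, hz] at hcs
  have hbernoulli := one_add_mul_sub_le_pow (neg_one_le_real_inner_of_norm_eq_one hx hz) n
  rw [norm_sub_sq_real, hx, hz]
  simp only [one_pow] at hcs ⊢
  refine hcs.trans ?_
  rw [mul_assoc]
  exact mul_le_mul_of_nonneg_left (by linarith) p.weylNormSq_nonneg

end MvPolynomial

lemma evalSys_smul_eq_zero {n m : ℕ} {d : Fin m → ℕ} {f : Fin m → MvPolynomial (Fin (n + 1)) ℝ}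
    (hf : ∀ i, (f i).IsHomogeneous (d i)) (c : ℝ) {y : EuclideanSpace ℝ (Fin (n + 1))}
    (hy : evalSys f y = 0) : evalSys f (c • y) = 0 := by
  ext i
  show MvPolynomial.eval (c • y.ofLp) (f i) = 0
  rw [(hf i).eval_smul, show MvPolynomial.eval y.ofLp (f i) = 0 from congrArg (· i) hy, mul_zero]

theorem norm_evalSys_sub_le {n m : ℕ} {d : Fin m → ℕ}
    {f : Fin m → MvPolynomial (Fin (n + 1)) ℝ} (hf : ∀ i, (f i).IsHomogeneous (d i))
    {x z : EuclideanSpace ℝ (Fin (n + 1))} (hx : ‖x‖ = 1) (hz : ‖z‖ = 1) :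
    ‖evalSys f x - evalSys f z‖ ≤ weylNorm f * √(Dmax d : ℝ) * ‖x - z‖ := by
  have hW : weylNormSq f = ∑ i, (f i).weylNormSq := rfl
  have hsq : ‖evalSys f x - evalSys f z‖ ^ 2 ≤ weylNormSq f * Dmax d * ‖x - z‖ ^ 2 := by
    rw [EuclideanSpace.real_norm_sq_eq, hW, sum_mul, sum_mul]
    refine sum_le_sum fun i _ => ?_
    calc (MvPolynomial.eval x.ofLp (f i) - MvPolynomial.eval z.ofLp (f i)) ^ 2
        ≤ (f i).weylNormSq * d i * ‖x - z‖ ^ 2 :=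
          (hf i).sq_eval_sub_eval_le_of_norm_eq_one hx hz
      _ ≤ (f i).weylNormSq * Dmax d * ‖x - z‖ ^ 2 := by
          gcongr
          · exact (f i).weylNormSq_nonneg
          · exact le_sup (mem_univ i)
  have hW0 : 0 ≤ weylNormSq f := hW ▸ sum_nonneg fun i _ => (f i).weylNormSq_nonneg
  have hrhs : 0 ≤ weylNorm f * √(Dmax d : ℝ) * ‖x - z‖ :=
    mul_nonneg (mul_nonneg (Real.sqrt_nonneg _) (Real.sqrt_nonneg _)) (norm_nonneg _)
  refine (pow_le_pow_iff_left₀ (norm_nonneg _) hrhs two_ne_zero).mp ?_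
  rw [mul_pow, mul_pow, weylNorm, Real.sq_sqrt hW0, Real.sq_sqrt (Nat.cast_nonneg _)]
  exact hsq

/-- `1.21 = 1.1²` works because `4 (1 - b)² - (1 - 1.21 b)` has negative discriminant. -/
lemma sq_sub_one_sub_sq_le {r : ℝ} (hr0 : 0 ≤ r) (hr : r ≤ 1 / 2) (b : ℝ) :
    r ^ 2 - (1 - b) ^ 2 ≤ 1.21 * r ^ 2 * b := by
  rcases le_or_gt 1 (1.21 * b) with hb | hb
  · nlinarith [sq_nonneg (1 - b), mul_nonneg (sub_nonneg.mpr hb) (sq_nonneg r)]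
  · nlinarith [sq_nonneg (2 * b - 1.6975),
      mul_nonneg (sub_nonneg.mpr hb.le) (show 0 ≤ 1 / 4 - r ^ 2 by nlinarith)]

/-- Rests on the identity `‖y‖ ‖x - y/‖y‖‖² = ‖x - y‖² - (1 - ‖y‖)²` for a unit vector `x`. -/
theorem norm_sub_inv_norm_smul_lt {E : Type*} [NormedAddCommGroup E] [InnerProductSpace ℝ E]
    {x y : E} {r : ℝ} (hx : ‖x‖ = 1) (hxy : ‖x - y‖ < r) (hr : r ≤ 1 / 2) :
    ‖x - ‖y‖⁻¹ • y‖ < 1.1 * r := by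
  have hr0 : 0 ≤ r := (norm_nonneg _).trans hxy.le
  have hy : 0 < ‖y‖ := by linarith [norm_sub_norm_le x y]
  have hid : ‖y‖ * ‖x - ‖y‖⁻¹ • y‖ ^ 2 = ‖x - y‖ ^ 2 - (1 - ‖y‖) ^ 2 := by
    rw [norm_sub_sq_real, norm_sub_sq_real, norm_smul, inner_smul_right, hx,
      Real.norm_of_nonneg (inv_nonneg.mpr hy.le)]
    field_simp
    ring
  have hlt : ‖y‖ * ‖x - ‖y‖⁻¹ • y‖ ^ 2 < ‖y‖ * (1.1 * r) ^ 2 := by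
    nlinarith [sq_sub_one_sub_sq_le hr0 hr ‖y‖, norm_nonneg (x - y)]
  exact lt_of_pow_lt_pow_left₀ 2 (by positivity) (lt_of_mul_lt_mul_left hlt hy.le)

theorem statement10_general {n m : ℕ} (d : Fin m → ℕ)
    (f : Fin m → MvPolynomial (Fin (n + 1)) ℝ) (hf : ∀ i, (f i).IsHomogeneous (d i))
    (η : ℝ) (hη : η * Real.sqrt (n + 1) ≤ 1 / 2)
    (x : EuclideanSpace ℝ (Fin (n + 1)))
    (hx : x ∈ Metric.sphere (0 : EuclideanSpace ℝ (Fin (n + 1))) 1)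
    (hfx : ‖evalSys f x‖ > 1.1 * Real.sqrt ((Dmax d) * (n + 1)) * weylNorm f * η) :
    ∀ y ∈ Metric.ball x (η * Real.sqrt (n + 1)), evalSys f y ≠ 0 := by
  intro y hy hfy
  have hx1 : ‖x‖ = 1 := mem_sphere_zero_iff_norm.mp hx
  have hxy : ‖x - y‖ < η * √(n + 1) := by rwa [mem_ball, dist_comm, dist_eq_norm] at hy
  have hy0 : y ≠ 0 := by
    rintro rfl
    rw [sub_zero, hx1] at hxy
    linarith
  have hz : ‖‖y‖⁻¹ • y‖ = 1 := norm_smul_inv_norm hy0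
  have hfz : evalSys f (‖y‖⁻¹ • y) = 0 := evalSys_smul_eq_zero hf _ hfy
  refine lt_irrefl ‖evalSys f x‖ ?_
  calc ‖evalSys f x‖ = ‖evalSys f x - evalSys f (‖y‖⁻¹ • y)‖ := by rw [hfz, sub_zero]
    _ ≤ weylNorm f * √(Dmax d : ℝ) * ‖x - ‖y‖⁻¹ • y‖ := norm_evalSys_sub_le hf hx1 hz
    _ ≤ weylNorm f * √(Dmax d : ℝ) * (1.1 * (η * √(n + 1))) := by
        gcongr
        · exact mul_nonneg (Real.sqrt_nonneg _) (Real.sqrt_nonneg _)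
        · exact (norm_sub_inv_norm_smul_lt hx1 hxy hη).le
    _ = 1.1 * √((Dmax d) * (n + 1)) * weylNorm f * η := by
        rw [Real.sqrt_mul (Nat.cast_nonneg _)]
        ring
    _ < ‖evalSys f x‖ := hfx

/-- (Corollary `excl`.) If sep(η) = η√(n+1) ≤ 1/2 and x ∈ Sⁿ satisfies
‖f(x)‖ > δ(f,η) = 1.1·√(D(n+1))·‖f‖·η, then f has no zero in the Euclidean ball
B(x, sep(η)). -/
theorem statement10 {n m : ℕ} (hm : m ≤ n + 1) (d : Fin m → ℕ) (hd : ∀ i, 1 ≤ d i)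
    (f : Fin m → MvPolynomial (Fin (n + 1)) ℝ) (hf : ∀ i, (f i).IsHomogeneous (d i))
    (hf0 : f ≠ 0)
    (η : ℝ) (hη0 : 0 < η) (hη : η * Real.sqrt (n + 1) ≤ 1 / 2)
    (x : EuclideanSpace ℝ (Fin (n + 1)))
    (hx : x ∈ Metric.sphere (0 : EuclideanSpace ℝ (Fin (n + 1))) 1)
    (hfx : ‖evalSys f x‖ > 1.1 * Real.sqrt ((Dmax d) * (n + 1)) * weylNorm f * η) :
    ∀ y ∈ Metric.ball x (η * Real.sqrt (n + 1)), evalSys f y ≠ 0 :=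
  statement10_general d f hf η hη x hx hfx
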